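/- arXiv:1801.04259 — 7 statements merged into one kernel-verified Lean document; each statement's English description precedes it below -/
import Mathlib

section
/- For real numbers a ≥ b ≥ c > 0, the scalar curvature quantity 2(a² + b² + c²) - (a⁴b⁴ + a⁴c⁴ + b⁴c⁴)/(a²b²c²) is less than or equal to min{a² + b² + c², 4(b² + c²)}, with equality if and only if a = b = c. -/
set_option maxHeartbeats 1000000 in
theorem stmt_4 (a b c : ℝ) (hab : a ≥ b) (hbc : b ≥ c) (hc : c > 0) :
    (2 * (a ^ 2 + b ^ 2 + c ^ 2) - (a ^ 4 * b ^ 4 + a ^ 4 * c ^ 4 + b ^ 4 * c ^ 4) / (a ^ 2 * b ^ 2 * c ^ 2)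
        ≤ min (a ^ 2 + b ^ 2 + c ^ 2) (4 * (b ^ 2 + c ^ 2))) ∧
    (2 * (a ^ 2 + b ^ 2 + c ^ 2) - (a ^ 4 * b ^ 4 + a ^ 4 * c ^ 4 + b ^ 4 * c ^ 4) / (a ^ 2 * b ^ 2 * c ^ 2)
        = min (a ^ 2 + b ^ 2 + c ^ 2) (4 * (b ^ 2 + c ^ 2)) ↔ a = b ∧ b = c) := by
  have hb : (0:ℝ) < b := lt_of_lt_of_le hc hbc
  have ha : (0:ℝ) < a := lt_of_lt_of_le hb hab
  have hd : (0:ℝ) < a ^ 2 * b ^ 2 * c ^ 2 := by positivity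
  have key1 : (a ^ 2 + b ^ 2 + c ^ 2) * (a ^ 2 * b ^ 2 * c ^ 2)
      ≤ a ^ 4 * b ^ 4 + a ^ 4 * c ^ 4 + b ^ 4 * c ^ 4 := by
    nlinarith [sq_nonneg (c ^ 2 * (a ^ 2 - b ^ 2)), sq_nonneg (b ^ 2 * (a ^ 2 - c ^ 2)),
      sq_nonneg (a ^ 2 * (b ^ 2 - c ^ 2))]
  have key2 : (2 * (a ^ 2 + b ^ 2 + c ^ 2) - 4 * (b ^ 2 + c ^ 2)) * (a ^ 2 * b ^ 2 * c ^ 2)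
      < a ^ 4 * b ^ 4 + a ^ 4 * c ^ 4 + b ^ 4 * c ^ 4 := by
    nlinarith [sq_nonneg (a ^ 2 * (b ^ 2 - c ^ 2)), mul_pos (pow_pos hb 4) (pow_pos hc 4),
      mul_pos (mul_pos (pow_pos ha 2) (pow_pos hb 2)) (pow_pos hc 2),
      mul_pos (mul_pos (mul_pos (pow_pos ha 2) (pow_pos hb 2)) (pow_pos hc 2))
        (add_pos (pow_pos hb 2) (pow_pos hc 2))]
  have h1 : (a ^ 2 + b ^ 2 + c ^ 2)
      ≤ (a ^ 4 * b ^ 4 + a ^ 4 * c ^ 4 + b ^ 4 * c ^ 4) / (a ^ 2 * b ^ 2 * c ^ 2) :=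
    (le_div_iff₀ hd).mpr key1
  have h2 : 2 * (a ^ 2 + b ^ 2 + c ^ 2) - 4 * (b ^ 2 + c ^ 2)
      < (a ^ 4 * b ^ 4 + a ^ 4 * c ^ 4 + b ^ 4 * c ^ 4) / (a ^ 2 * b ^ 2 * c ^ 2) :=
    (lt_div_iff₀ hd).mpr key2
  have le1 : 2 * (a ^ 2 + b ^ 2 + c ^ 2)
      - (a ^ 4 * b ^ 4 + a ^ 4 * c ^ 4 + b ^ 4 * c ^ 4) / (a ^ 2 * b ^ 2 * c ^ 2)
      ≤ a ^ 2 + b ^ 2 + c ^ 2 := by linarith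
  have lt2 : 2 * (a ^ 2 + b ^ 2 + c ^ 2)
      - (a ^ 4 * b ^ 4 + a ^ 4 * c ^ 4 + b ^ 4 * c ^ 4) / (a ^ 2 * b ^ 2 * c ^ 2)
      < 4 * (b ^ 2 + c ^ 2) := by linarith
  refine ⟨le_min le1 lt2.le, ?_, ?_⟩
  · intro h
    have hmin : min (a ^ 2 + b ^ 2 + c ^ 2) (4 * (b ^ 2 + c ^ 2)) = a ^ 2 + b ^ 2 + c ^ 2 := by
      rcases min_cases (a ^ 2 + b ^ 2 + c ^ 2) (4 * (b ^ 2 + c ^ 2)) with ⟨h', _⟩ | ⟨h', _⟩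
      · exact h'
      · exfalso; linarith [h' ▸ h ▸ lt2]
    rw [hmin] at h
    have heq : (a ^ 2 + b ^ 2 + c ^ 2) * (a ^ 2 * b ^ 2 * c ^ 2)
        = a ^ 4 * b ^ 4 + a ^ 4 * c ^ 4 + b ^ 4 * c ^ 4 := by
      have : (a ^ 4 * b ^ 4 + a ^ 4 * c ^ 4 + b ^ 4 * c ^ 4) / (a ^ 2 * b ^ 2 * c ^ 2)
          = a ^ 2 + b ^ 2 + c ^ 2 := by linarith
      field_simp at this
      linarith
    have sab : (c ^ 2 * (a ^ 2 - b ^ 2)) ^ 2 ≤ 0 := by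
      nlinarith [sq_nonneg (b ^ 2 * (a ^ 2 - c ^ 2)), sq_nonneg (a ^ 2 * (b ^ 2 - c ^ 2))]
    have sbc : (a ^ 2 * (b ^ 2 - c ^ 2)) ^ 2 ≤ 0 := by
      nlinarith [sq_nonneg (b ^ 2 * (a ^ 2 - c ^ 2)), sq_nonneg (c ^ 2 * (a ^ 2 - b ^ 2))]
    have hab2 : a ^ 2 = b ^ 2 := by
      have h0 : c ^ 2 * (a ^ 2 - b ^ 2) = 0 :=
        sq_eq_zero_iff.mp (le_antisymm sab (sq_nonneg _))
      rcases mul_eq_zero.mp h0 with h' | h'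
      · exact absurd h' (by positivity)
      · linarith
    have hbc2 : b ^ 2 = c ^ 2 := by
      have h0 : a ^ 2 * (b ^ 2 - c ^ 2) = 0 :=
        sq_eq_zero_iff.mp (le_antisymm sbc (sq_nonneg _))
      rcases mul_eq_zero.mp h0 with h' | h'
      · exact absurd h' (by positivity)
      · linarith
    constructor
    · have : (a - b) * (a + b) = 0 := by linear_combination hab2
      rcases mul_eq_zero.mp this with h' | h'
      · linarith
      · exfalso; linarith
    · have : (b - c) * (b + c) = 0 := by linear_combination hbc2
      rcases mul_eq_zero.mp this with h' | h'
      · linarith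
      · exfalso; linarith
  · rintro ⟨rfl, rfl⟩
    rw [min_eq_left (by nlinarith)]
    have h3 : (a ^ 4 * a ^ 4 + a ^ 4 * a ^ 4 + a ^ 4 * a ^ 4) / (a ^ 2 * a ^ 2 * a ^ 2)
        = 3 * a ^ 2 := by
      rw [div_eq_iff hd.ne']; ring
    rw [h3]; ring
end

section
/- For real numbers a ≥ b ≥ c > 0, one has a² < a²(b⁴ + c⁴)/(2b²c²) + b²c²/(2a²) + b² + c². -/
theorem stmt_6 (a b c : ℝ) (hab : a ≥ b) (hbc : b ≥ c) (hc : c > 0) :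
    a ^ 2 < a ^ 2 * (b ^ 4 + c ^ 4) / (2 * b ^ 2 * c ^ 2) + b ^ 2 * c ^ 2 / (2 * a ^ 2)
      + b ^ 2 + c ^ 2 := by
  have hb : b > 0 := lt_of_lt_of_le hc hbc
  have ha : a > 0 := lt_of_lt_of_le hb hab
  have h1 : a ^ 2 ≤ a ^ 2 * (b ^ 4 + c ^ 4) / (2 * b ^ 2 * c ^ 2) := by
    rw [le_div_iff₀ (by positivity)]
    nlinarith [sq_nonneg (b^2 - c^2), sq_nonneg a]
  have h2 : (0:ℝ) < b ^ 2 * c ^ 2 / (2 * a ^ 2) := by positivity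
  nlinarith [sq_nonneg b, sq_nonneg c]
end

section
/- Let a ≥ b ≥ c > 0 be real numbers and define g(t) = t⁶(b² + c²)² + t⁴a²(b² - c²)² - b⁴c⁴(t² + a²). Then g((abc)^{1/3}) ≥ (abc)²(b⁴ + c⁴) > 0. -/
theorem stmt_9 (a b c : ℝ) (hab : a ≥ b) (hbc : b ≥ c) (hc : c > 0)
    (g : ℝ → ℝ)
    (hg : ∀ t : ℝ, g t = t ^ 6 * (b ^ 2 + c ^ 2) ^ 2 + t ^ 4 * a ^ 2 * (b ^ 2 - c ^ 2) ^ 2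
        - b ^ 4 * c ^ 4 * (t ^ 2 + a ^ 2)) :
    g ((a * b * c) ^ ((1 : ℝ) / 3)) ≥ (a * b * c) ^ 2 * (b ^ 4 + c ^ 4) ∧
      (0 : ℝ) < (a * b * c) ^ 2 * (b ^ 4 + c ^ 4) := by
  have hb : 0 < b := lt_of_lt_of_le hc hbc
  have ha : 0 < a := lt_of_lt_of_le hb hab
  have hP : 0 < a * b * c := by positivity
  set x : ℝ := (a * b * c) ^ ((1 : ℝ) / 3) with hx
  have hxpos : 0 < x := Real.rpow_pos_of_pos hP _
  have hx6 : x ^ 6 = (a * b * c) ^ 2 := by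
    rw [hx, ← Real.rpow_natCast ((a * b * c) ^ ((1:ℝ)/3)) 6,
      ← Real.rpow_mul hP.le, ← Real.rpow_natCast (a * b * c) 2]
    norm_num
  have hx2 : x ^ 2 ≤ a ^ 2 := by
    have h1 : x ^ 2 = (a * b * c) ^ ((2 : ℝ) / 3) := by
      rw [hx, ← Real.rpow_natCast ((a * b * c) ^ ((1:ℝ)/3)) 2, ← Real.rpow_mul hP.le]
      norm_num
    have h2 : a ^ 2 = (a ^ 3) ^ ((2 : ℝ) / 3) := by
      rw [← Real.rpow_natCast a 3, ← Real.rpow_mul ha.le, ← Real.rpow_natCast a 2]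
      norm_num
    rw [h1, h2]
    exact Real.rpow_le_rpow hP.le (by nlinarith [mul_le_mul hab (hbc.trans hab) hc.le ha.le]) (by norm_num)
  constructor
  · rw [hg]
    nlinarith [mul_nonneg (pow_nonneg hxpos.le 4) (mul_nonneg (sq_nonneg a) (sq_nonneg (b^2 - c^2))),
      mul_le_mul_of_nonneg_left hx2 (by positivity : (0:ℝ) ≤ b ^ 4 * c ^ 4), sq_nonneg (b*c)]
  · positivity
end

section
/- Let a ≥ b ≥ c > 0 with a² > 3(b² + c²), and let x, y, z > 0 with x ≥ y ≥ z satisfy xyz = abc, b² + c² = y² + z², x² > 3(y² + z²), and 2(a² + b² + c²) - (a⁴b⁴ + a⁴c⁴ + b⁴c⁴)/(abc)² = 2(x² + y² + z²) - (x⁴y⁴ + x⁴z⁴ + y⁴z⁴)/(xyz)². Then (x, y, z) = (a, b, c). -/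
set_option maxHeartbeats 1000000 in
theorem stmt_10 (a b c x y z : ℝ) (hc : c > 0) (hbc : b ≥ c) (hab : a ≥ b)
    (ha2 : a ^ 2 > 3 * (b ^ 2 + c ^ 2))
    (hz : z > 0) (hyz : y ≥ z) (hxy : x ≥ y)
    (hvol : x * y * z = a * b * c)
    (hl1 : b ^ 2 + c ^ 2 = y ^ 2 + z ^ 2)
    (hx2 : x ^ 2 > 3 * (y ^ 2 + z ^ 2))
    (hscal : 2 * (a ^ 2 + b ^ 2 + c ^ 2)
        - (a ^ 4 * b ^ 4 + a ^ 4 * c ^ 4 + b ^ 4 * c ^ 4) / (a * b * c) ^ 2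
      = 2 * (x ^ 2 + y ^ 2 + z ^ 2)
        - (x ^ 4 * y ^ 4 + x ^ 4 * z ^ 4 + y ^ 4 * z ^ 4) / (x * y * z) ^ 2) :
    x = a ∧ y = b ∧ z = c := by
  have hb : b > 0 := lt_of_lt_of_le hc hbc
  have ha : a > 0 := lt_of_lt_of_le hb hab
  have hy : y > 0 := lt_of_lt_of_le hz hyz
  have hx : x > 0 := lt_of_lt_of_le hy hxy
  obtain ⟨S, hS⟩ : ∃ S : ℝ, S = b ^ 2 + c ^ 2 := ⟨_, rfl⟩
  obtain ⟨T1, hT1⟩ : ∃ T1 : ℝ, T1 = b ^ 2 * c ^ 2 := ⟨_, rfl⟩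
  obtain ⟨T2, hT2⟩ : ∃ T2 : ℝ, T2 = y ^ 2 * z ^ 2 := ⟨_, rfl⟩
  obtain ⟨W, hW⟩ : ∃ W : ℝ, W = (a * b * c) ^ 2 := ⟨_, rfl⟩
  have hT1p : (0:ℝ) < T1 := by rw [hT1]; positivity
  have hT2p : (0:ℝ) < T2 := by rw [hT2]; positivity
  have hSp : (0:ℝ) < S := by rw [hS]; positivity
  have hWp : (0:ℝ) < W := by rw [hW]; positivity
  have hA : a ^ 2 * T1 = W := by rw [hT1, hW]; ring
  have hX : x ^ 2 * T2 = W := by rw [hT2, hW, ← hvol]; ring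
  -- cleared scalar-curvature equation
  have h2 : 2 * (a ^ 2 + S) * W - (a ^ 4 * (S ^ 2 - 2 * T1) + T1 ^ 2)
      = 2 * (x ^ 2 + S) * W - (x ^ 4 * (S ^ 2 - 2 * T2) + T2 ^ 2) := by
    have e1 : a ^ 4 * (S ^ 2 - 2 * T1) + T1 ^ 2
        = a ^ 4 * b ^ 4 + a ^ 4 * c ^ 4 + b ^ 4 * c ^ 4 := by rw [hS, hT1]; ring
    have e2 : x ^ 4 * (S ^ 2 - 2 * T2) + T2 ^ 2
        = x ^ 4 * y ^ 4 + x ^ 4 * z ^ 4 + y ^ 4 * z ^ 4 := by rw [hS, hl1, hT2]; ring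
    have e3 : (x * y * z) ^ 2 = W := by rw [hW, hvol]
    have e4 : a ^ 2 + S = a ^ 2 + b ^ 2 + c ^ 2 := by rw [hS]; ring
    have e5 : x ^ 2 + S = x ^ 2 + y ^ 2 + z ^ 2 := by rw [hS, hl1]; ring
    have hWne : W ≠ 0 := ne_of_gt hWp
    rw [← hW, e3] at hscal
    have h6 : (2 * (a ^ 2 + b ^ 2 + c ^ 2)
        - (a ^ 4 * b ^ 4 + a ^ 4 * c ^ 4 + b ^ 4 * c ^ 4) / W) * W
        = (2 * (x ^ 2 + y ^ 2 + z ^ 2)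
        - (x ^ 4 * y ^ 4 + x ^ 4 * z ^ 4 + y ^ 4 * z ^ 4) / W) * W := by rw [hscal]
    rw [sub_mul, sub_mul, div_mul_cancel₀ _ hWne, div_mul_cancel₀ _ hWne] at h6
    rw [e1, e2, e4, e5]
    linarith [h6]
  -- factored key identity
  have key : (T1 - T2) * (W ^ 2 * S ^ 2 * (T1 + T2) - 4 * W ^ 2 * T1 * T2
      - T1 ^ 2 * T2 ^ 2 * (T1 + T2)) = 0 := by
    linear_combination (T1 ^ 2 * T2 ^ 2) * h2
      - (2 * W * T1 * T2 ^ 2 - (S ^ 2 - 2 * T1) * T2 ^ 2 * (a ^ 2 * T1 + W)) * hA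
      + (2 * W * T2 * T1 ^ 2 - (S ^ 2 - 2 * T2) * T1 ^ 2 * (x ^ 2 * T2 + W)) * hX
  -- inequalities
  have h4 : 4 * T1 ≤ S ^ 2 := by
    rw [hT1, hS]; linarith [sq_nonneg (b ^ 2 - c ^ 2)]
  have h5 : 4 * T2 ≤ S ^ 2 := by
    rw [hT2, hS, hl1]; linarith [sq_nonneg (y ^ 2 - z ^ 2)]
  have ha2' : 3 * S < a ^ 2 := by rw [hS]; exact ha2
  have hx2' : 3 * S < x ^ 2 := by rw [hS, hl1]; exact hx2
  have h6 : 3 * S * T1 < W := by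
    have := mul_lt_mul_of_pos_right ha2' hT1p
    linarith [hA, this]
  have h7 : 3 * S * T2 < W := by
    have := mul_lt_mul_of_pos_right hx2' hT2p
    linarith [hX, this]
  have hW2 : (3 * S * T1) * (3 * S * T2) < W * W :=
    mul_lt_mul'' h6 h7 (by positivity) (by positivity)
  have hS4 : 4 * T1 * (4 * T2) ≤ S ^ 2 * S ^ 2 :=
    mul_le_mul h4 h5 (by positivity) (by positivity)
  have hWS : 2 * T1 ^ 2 * T2 ^ 2 < W ^ 2 * S ^ 2 := by
    have q2 := mul_lt_mul_of_pos_right hW2 (show (0:ℝ) < S ^ 2 by positivity)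
    have q3 := mul_le_mul_of_nonneg_right hS4 (show (0:ℝ) ≤ 9 * (T1 * T2) by positivity)
    linarith [q2, q3, sq_nonneg (T1 * T2)]
  have hB : 0 < W ^ 2 * S ^ 2 * (T1 + T2) - 4 * W ^ 2 * T1 * T2
      - T1 ^ 2 * T2 ^ 2 * (T1 + T2) := by
    have e1 : 4 * T1 * T2 ≤ S ^ 2 * T2 := by
      have := mul_le_mul_of_nonneg_right h4 hT2p.le; linarith [this]
    have e2 : 4 * T2 * T1 ≤ S ^ 2 * T1 := by
      have := mul_le_mul_of_nonneg_right h5 hT1p.le; linarith [this]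
    have e12 : 0 ≤ S ^ 2 * (T1 + T2) - 8 * (T1 * T2) := by linarith [e1, e2]
    have e4 : 0 ≤ W ^ 2 * (S ^ 2 * (T1 + T2) - 8 * (T1 * T2)) :=
      mul_nonneg (by positivity) e12
    have e3 : 2 * T1 ^ 2 * T2 ^ 2 * (T1 + T2) < W ^ 2 * S ^ 2 * (T1 + T2) :=
      mul_lt_mul_of_pos_right hWS (by positivity)
    linarith [e3, e4]
  have hT12 : T1 = T2 := by
    rcases mul_eq_zero.mp key with h | h
    · linarith
    · exfalso; linarith
  -- back to b,c,y,z
  have hbc2 : b ^ 2 + c ^ 2 = y ^ 2 + z ^ 2 := hl1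
  have hTT : b ^ 2 * c ^ 2 = y ^ 2 * z ^ 2 := by rw [← hT1, ← hT2]; exact hT12
  have hfac : (b ^ 2 - y ^ 2) * (b ^ 2 - z ^ 2) = 0 := by
    linear_combination b ^ 2 * hbc2 - hTT
  have hzy : z ^ 2 ≤ y ^ 2 := pow_le_pow_left₀ hz.le hyz 2
  have hcb : c ^ 2 ≤ b ^ 2 := pow_le_pow_left₀ hc.le hbc 2
  have hb2 : b ^ 2 = y ^ 2 ∧ c ^ 2 = z ^ 2 := by
    rcases mul_eq_zero.mp hfac with h | h
    · constructor <;> [linarith; linarith]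
    · constructor <;> [linarith; linarith]
  have hby : b = y := by
    have h' : (b - y) * (b + y) = 0 := by linear_combination hb2.1
    rcases mul_eq_zero.mp h' with h | h
    · linarith
    · exfalso; linarith
  have hcz : c = z := by
    have h' : (c - z) * (c + z) = 0 := by linear_combination hb2.2
    rcases mul_eq_zero.mp h' with h | h
    · linarith
    · exfalso; linarith
  have hxa : x = a := by
    rw [← hby, ← hcz] at hvol
    have h9 : x * b = a * b := mul_right_cancel₀ (ne_of_gt hc) hvol
    exact mul_right_cancel₀ (ne_of_gt hb) h9
  exact ⟨hxa, hby.symm, hcz.symm⟩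
end

section
/- The function h(x) = (1 + x)(4x - 3)/(x - 1) on the interval (0, 1/2] attains its maximum value 9 - 4√2 at x = 1 - 1/√2. -/
theorem stmt_12 (h : ℝ → ℝ) (hh : ∀ x : ℝ, h x = (1 + x) * (4 * x - 3) / (x - 1)) :
    (∀ x ∈ Set.Ioc (0 : ℝ) (1 / 2), h x ≤ 9 - 4 * Real.sqrt 2) ∧
    (1 - 1 / Real.sqrt 2) ∈ Set.Ioc (0 : ℝ) (1 / 2) ∧
    h (1 - 1 / Real.sqrt 2) = 9 - 4 * Real.sqrt 2 := by
  have hs : Real.sqrt 2 ^ 2 = 2 := Real.sq_sqrt (by norm_num)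
  have hs1 : 1 < Real.sqrt 2 := by nlinarith [Real.sqrt_nonneg 2]
  have hs2 : Real.sqrt 2 < 2 := by nlinarith [Real.sqrt_nonneg 2]
  have hsne : Real.sqrt 2 ≠ 0 := by positivity
  have hu : (1 / Real.sqrt 2) ^ 2 = 1 / 2 := by rw [div_pow, hs, one_pow]
  have hsu : Real.sqrt 2 * (1 / Real.sqrt 2) = 1 := mul_one_div_cancel hsne
  refine ⟨?_, ⟨?_, ?_⟩, ?_⟩
  · intro x hx
    obtain ⟨hx1, hx2⟩ := hx
    rw [hh, div_le_iff_of_neg (by linarith : x - 1 < 0)]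
    have key : (Real.sqrt 2 * x - Real.sqrt 2 + 1) ^ 2
        = 2 * x ^ 2 + 2 * Real.sqrt 2 * x - 4 * x + 3 - 2 * Real.sqrt 2 := by
      linear_combination (x ^ 2 - 2 * x + 1) * hs
    nlinarith [sq_nonneg (Real.sqrt 2 * x - Real.sqrt 2 + 1), key]
  · rw [sub_pos, div_lt_one (by linarith)]; linarith
  · have : (1 : ℝ) / 2 ≤ 1 / Real.sqrt 2 := by
      rw [div_le_div_iff₀ (by norm_num) (by positivity)]
      linarith
    linarith
  · have hx0 : (1 - 1 / Real.sqrt 2) - 1 ≠ 0 := by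
      have : (1 - 1 / Real.sqrt 2) - 1 = -(1 / Real.sqrt 2) := by ring
      rw [this]
      exact neg_ne_zero.mpr (one_div_ne_zero hsne)
    rw [hh, div_eq_iff hx0]
    linear_combination 4 * hu - 4 * hsu
end

section
/- Let a ≥ b ≥ c > 0. If a² ≤ 2b², then (a² + b² + c²)/a² > 3/2. If 2b² ≤ a² ≤ 3(b² + c²), then (a² + b² + c²)/(4b²(1 - b²/a²)) ≥ 4/3. If a² ≥ 3(b² + c²), then (b² + c²)/(b²(1 - b²/a²)) > 1. -/
theorem stmt_14 (a b c : ℝ) (hab : a ≥ b) (hbc : b ≥ c) (hc : c > 0) :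
    (a ^ 2 ≤ 2 * b ^ 2 → (a ^ 2 + b ^ 2 + c ^ 2) / a ^ 2 > 3 / 2) ∧
    (2 * b ^ 2 ≤ a ^ 2 → a ^ 2 ≤ 3 * (b ^ 2 + c ^ 2) →
      (a ^ 2 + b ^ 2 + c ^ 2) / (4 * b ^ 2 * (1 - b ^ 2 / a ^ 2)) ≥ 4 / 3) ∧
    (a ^ 2 ≥ 3 * (b ^ 2 + c ^ 2) →
      (b ^ 2 + c ^ 2) / (b ^ 2 * (1 - b ^ 2 / a ^ 2)) > 1) := by
  have hb : b > 0 := lt_of_lt_of_le hc hbc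
  have ha : a > 0 := lt_of_lt_of_le hb hab
  have ht : b ^ 2 / a ^ 2 * a ^ 2 = b ^ 2 := div_mul_cancel₀ _ (by positivity)
  refine ⟨?_, ?_, ?_⟩
  · intro h
    rw [gt_iff_lt, lt_div_iff₀ (by positivity)]
    nlinarith [sq_nonneg c]
  · intro h1 h2
    have hd : (0:ℝ) < 1 - b ^ 2 / a ^ 2 := by
      rw [sub_pos, div_lt_one (by positivity)]; nlinarith
    rw [ge_iff_le, le_div_iff₀ (by positivity)]
    nlinarith [sq_nonneg (a ^ 2 - 2 * b ^ 2), mul_pos ha ha, sq_nonneg a,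
      mul_le_mul_of_nonneg_right h2 (sq_nonneg a)]
  · intro h
    have hd : (0:ℝ) < 1 - b ^ 2 / a ^ 2 := by
      rw [sub_pos, div_lt_one (by positivity)]; nlinarith
    rw [gt_iff_lt, lt_div_iff₀ (by positivity)]
    nlinarith [sq_nonneg (b ^ 2), mul_pos (mul_pos hc hc) (mul_pos ha ha)]
end

section
/- For real numbers a, b > 0 and integers k ≥ 0, 0 ≤ j ≤ k, define ν_{k,j}(a,b) = a²(k - 2j)² + 2b²((2j+1)k - 2j²). Then ν_{1,0}(a,b) = ν_{1,1}(a,b) = a² + 2b², and for a ≥ b the minimum of ν_{k,j}(a,b) over all k ≥ 1 and 0 ≤ j ≤ k equals min{a² + 2b², 8b²}. -/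
theorem stmt_18 (a b : ℝ) (ha : 0 < a) (hb : 0 < b)
    (ν : ℕ → ℕ → ℝ)
    (hν : ∀ k j : ℕ, j ≤ k →
      ν k j = a ^ 2 * ((k : ℝ) - 2 * j) ^ 2 + 2 * b ^ 2 * ((2 * (j : ℝ) + 1) * k - 2 * (j : ℝ) ^ 2)) :
    ν 1 0 = a ^ 2 + 2 * b ^ 2 ∧ ν 1 1 = a ^ 2 + 2 * b ^ 2 ∧
    (a ≥ b →
      IsLeast {v : ℝ | ∃ k j : ℕ, 1 ≤ k ∧ j ≤ k ∧ v = ν k j}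
        (min (a ^ 2 + 2 * b ^ 2) (8 * b ^ 2))) := by
  have h10 := hν 1 0 (by norm_num)
  have h11 := hν 1 1 le_rfl
  refine ⟨by rw [h10]; push_cast; ring, by rw [h11]; push_cast; ring, ?_⟩
  intro _hab
  constructor
  · rcases le_total (a ^ 2 + 2 * b ^ 2) (8 * b ^ 2) with h | h
    · exact ⟨1, 0, le_rfl, Nat.zero_le _, by rw [min_eq_left h, h10]; push_cast; ring⟩
    · refine ⟨2, 1, by norm_num, by norm_num, ?_⟩
      rw [min_eq_right h, hν 2 1 (by norm_num)]; push_cast; ring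
  · rintro v ⟨k, j, hk, hj, rfl⟩
    rw [hν k j hj]
    have hk1 : (1 : ℝ) ≤ (k : ℝ) := by exact_mod_cast hk
    have hjk : (j : ℝ) ≤ (k : ℝ) := by exact_mod_cast hj
    by_cases hkj : k = 2 * j
    · have hj1 : 1 ≤ j := by omega
      have hj1' : (1 : ℝ) ≤ (j : ℝ) := by exact_mod_cast hj1
      have hke : (k : ℝ) = 2 * j := by exact_mod_cast hkj
      have : 8 * b ^ 2 ≤ a ^ 2 * ((k : ℝ) - 2 * j) ^ 2 +
          2 * b ^ 2 * ((2 * (j : ℝ) + 1) * k - 2 * (j : ℝ) ^ 2) := by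
        rw [hke]
        nlinarith [sq_nonneg b, sq_nonneg ((j:ℝ) - 1)]
      exact le_trans (min_le_right _ _) this
    · have h1 : (1 : ℝ) ≤ ((k : ℝ) - 2 * j) ^ 2 := by
        have hne : (k : ℤ) - 2 * j ≠ 0 := by
          intro h; apply hkj; omega
        have : (1 : ℤ) ≤ ((k : ℤ) - 2 * j) ^ 2 := by
          rcases lt_or_gt_of_ne hne with h | h <;> nlinarith
        have := (@Int.cast_le ℝ _ _ _).2 this
        push_cast at this
        linarith
      have h2 : (1 : ℝ) ≤ (2 * (j : ℝ) + 1) * k - 2 * (j : ℝ) ^ 2 := by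
        have hjnn : (0 : ℝ) ≤ (j : ℝ) := Nat.cast_nonneg j
        nlinarith
      have : a ^ 2 + 2 * b ^ 2 ≤ a ^ 2 * ((k : ℝ) - 2 * j) ^ 2 +
          2 * b ^ 2 * ((2 * (j : ℝ) + 1) * k - 2 * (j : ℝ) ^ 2) := by
        nlinarith [sq_nonneg a, sq_nonneg b]
      exact le_trans (min_le_left _ _) this
end
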